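/- arXiv:1812.06911 — 5 statements merged into one kernel-verified Lean document; each statement's English description precedes it below -/
import Mathlib

section
/- Let t₀ > 0. For all w, v ∈ X_{t₀} (both equal to g off Ω), the operator 𝔗 satisfies the estimate |||𝔗(w) − 𝔗(v)||| ≤ M(μ(Ω) + μ(F′)) · t₀ · |||w − v||| + ‖w(·,0) − v(·,0)‖_{L¹(Ω)}. -/
open MeasureTheory Set

attribute [local instance] Classical.propDecidable

/-- The nonlocal fixed-point operator `𝔗`. -/
noncomputable def nonlocalT {G : Type*} [MeasurableSpace G] (μ : Measure G) (Ω : Set G)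
    (K : G → G → ℝ) (g : G → ℝ → ℝ) (w : G → ℝ → ℝ) : G → ℝ → ℝ :=
  fun x t =>
    if x ∈ Ω then w x 0 + ∫ r in (0:ℝ)..t, ∫ y, K x y * (w y r - w x r) ∂μ
    else g x t

/-- Membership in the space `X_{t₀}`: measurable, equal to the boundary datum `g`
off `Ω`, and `t ↦ w(·,t)|_Ω` continuous from `[0,t₀]` into `L¹(Ω,μ)`. -/
def MemX {G : Type*} [MeasurableSpace G] (μ : Measure G) (Ω : Set G)
    (g : G → ℝ → ℝ) (t₀ : ℝ) (w : G → ℝ → ℝ) : Prop :=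
  Measurable (fun p : G × ℝ => w p.1 p.2) ∧
  (∀ x ∉ Ω, ∀ t ∈ Icc (0:ℝ) t₀, w x t = g x t) ∧
  (∀ t ∈ Icc (0:ℝ) t₀, IntegrableOn (fun x => w x t) Ω μ) ∧
  (∀ s ∈ Icc (0:ℝ) t₀,
    Filter.Tendsto (fun t => ∫ x in Ω, |w x t - w x s| ∂μ)
      (nhdsWithin s (Icc (0:ℝ) t₀)) (nhds 0))

/-- The norm `|||w||| = max_{0 ≤ t ≤ t₀} ‖w(·,t)‖_{L¹(Ω)}`. -/
noncomputable def tripleNorm {G : Type*} [MeasurableSpace G] (μ : Measure G) (Ω : Set G)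
    (t₀ : ℝ) (w : G → ℝ → ℝ) : ℝ :=
  ⨆ t : Icc (0:ℝ) t₀, ∫ x in Ω, |w x (t : ℝ)| ∂μ

/-! With `u = w - v`, for `x ∈ Ω` we have
`𝔗w(x,t) - 𝔗v(x,t) = u(x,0) + ∫₀ᵗ ∫ K(x,y) (u(y,r) - u(x,r)) dμ(y) dr`.
Since `u` vanishes off `Ω` and `0 ≤ K ≤ M` is supported in `Ω × F'`, the inner integral is at most
`M ‖u(·,r)‖_{L¹(Ω)} + M μ(F') |u(x,r)|`; integrating over `x ∈ Ω` and, by Fubini, over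
`r ∈ (0,t₀]` produces `M μ(Ω) t₀ |||u|||` and `M μ(F') t₀ |||u|||`.
The bound on `g` is what makes the inner integrals for `w` and `v` exist separately, and the
`L¹`-continuity in time makes `|||·|||` a maximum over a compact interval, hence finite. -/

open Filter Topology

section

variable {G : Type*} [MeasurableSpace G] {μ : Measure G}

theorem continuousOn_setIntegral_abs {Ω : Set G} {S : Set ℝ} {w : G → ℝ → ℝ}
    (hint : ∀ t ∈ S, IntegrableOn (fun x => w x t) Ω μ)
    (hcont : ∀ s ∈ S, Tendsto (fun t => ∫ x in Ω, |w x t - w x s| ∂μ) (𝓝[S] s) (𝓝 0)) :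
    ContinuousOn (fun t => ∫ x in Ω, |w x t| ∂μ) S := by
  intro s hs
  rw [ContinuousWithinAt, tendsto_iff_dist_tendsto_zero]
  refine squeeze_zero' (Eventually.of_forall fun _ => dist_nonneg) ?_ (hcont s hs)
  filter_upwards [self_mem_nhdsWithin] with t ht
  rw [Real.dist_eq, ← integral_sub (hint t ht).abs (hint s hs).abs]
  exact abs_integral_le_integral_abs.trans <|
    integral_mono ((hint t ht).abs.sub (hint s hs).abs).abs ((hint t ht).sub (hint s hs)).abs
      fun x => abs_abs_sub_abs_le_abs_sub _ _

theorem integrableOn_of_abs_le_of_notMem {f : G → ℝ} {Ω F : Set G} {C : ℝ}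
    (hΩ : MeasurableSet Ω) (hF : MeasurableSet F) (hFΩ : μ (F \ Ω) < ⊤)
    (hfm : AEStronglyMeasurable f μ) (hf : IntegrableOn f Ω μ) (hC : ∀ y ∉ Ω, |f y| ≤ C) :
    IntegrableOn f F μ := by
  rw [← inter_union_sdiff F Ω]
  exact (hf.mono_set inter_subset_right).union <|
    Measure.integrableOn_of_bounded hFΩ.ne hfm <|
      ae_restrict_of_forall_mem (hF.diff hΩ) fun y hy => hC y hy.2

theorem setIntegral_abs_le_of_abs_le_of_notMem {f : G → ℝ} {Ω F : Set G} {C : ℝ}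
    (hΩ : MeasurableSet Ω) (hF : MeasurableSet F) (hFΩ : μ (F \ Ω) < ⊤)
    (hfm : AEStronglyMeasurable f μ) (hf : IntegrableOn f Ω μ) (hC : ∀ y ∉ Ω, |f y| ≤ C) :
    ∫ y in F, |f y| ∂μ ≤ ∫ y in Ω, |f y| ∂μ + C * μ.real (F \ Ω) := by
  have hfF := integrableOn_of_abs_le_of_notMem hΩ hF hFΩ hfm hf hC
  conv_lhs => rw [← inter_union_sdiff F Ω]
  rw [setIntegral_union (disjoint_sdiff_self_right.mono_left inter_subset_right) (hF.diff hΩ)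
    (hfF.mono_set inter_subset_left).abs (hfF.mono_set sdiff_subset).abs]
  refine add_le_add (setIntegral_mono_set hf.abs (Eventually.of_forall fun _ => abs_nonneg _)
    inter_subset_right.eventuallyLE) ?_
  refine (Real.le_norm_self _).trans <| norm_setIntegral_le_of_norm_le_const hFΩ fun y hy => ?_
  rw [Real.norm_eq_abs, abs_abs]
  exact hC y hy.2

theorem abs_intervalIntegral_le_of_abs_le {J c : ℝ → ℝ} {A B a b t : ℝ} (ht : t ∈ Icc a b)
    (hA : 0 ≤ A) (hB : 0 ≤ B) (hc : IntegrableOn c (Ioc a b))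
    (hJc : ∀ r ∈ Ioc a t, |J r| ≤ A + B * |c r|) :
    |∫ r in a..t, J r| ≤ A * (b - a) + B * ∫ r in Ioc a b, |c r| := by
  have hsub : Ioc a t ⊆ Ioc a b := Ioc_subset_Ioc_right ht.2
  have hct : IntegrableOn (fun r => |c r|) (Ioc a t) := (hc.mono_set hsub).abs
  have hAt : IntegrableOn (fun _ => A) (Ioc a t) := integrableOn_const (by simp)
  have hbound : IntegrableOn (fun r => A + B * |c r|) (Ioc a t) := hAt.add (hct.const_mul B)
  rw [intervalIntegral.integral_of_le ht.1]
  calc |∫ r in Ioc a t, J r| ≤ ∫ r in Ioc a t, (A + B * |c r|) :=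
        norm_integral_le_of_norm_le hbound <| ae_restrict_of_forall_mem measurableSet_Ioc
          fun r hr => (Real.norm_eq_abs _).trans_le (hJc r hr)
    _ = A * (t - a) + B * ∫ r in Ioc a t, |c r| := by
        rw [integral_add hAt (hct.const_mul B), integral_const_mul,
          setIntegral_const, Real.volume_real_Ioc_of_le ht.1, smul_eq_mul, mul_comm]
    _ ≤ A * (b - a) + B * ∫ r in Ioc a b, |c r| := by
        have hcab : ∫ r in Ioc a t, |c r| ≤ ∫ r in Ioc a b, |c r| :=
          setIntegral_mono_set hc.abs (Eventually.of_forall fun _ => abs_nonneg _)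
            hsub.eventuallyLE
        gcongr
        exact ht.2

end

section Kernel

variable {G : Type*} [MeasurableSpace G] {μ : Measure G} {F : Set G} {k : G → ℝ} {M : ℝ}

theorem integrable_mul_sub_const (hk : Measurable k) (hk0 : ∀ y, 0 ≤ k y) (hkM : ∀ y, k y ≤ M)
    (hkF : ∀ y ∉ F, k y = 0) (hF : μ F < ⊤) {f : G → ℝ} (hf : IntegrableOn f F μ) (c : ℝ) :
    Integrable (fun y => k y * (f y - c)) μ :=
  IntegrableOn.integrable_of_forall_notMem_eq_zero
    (Integrable.bdd_mul (hf.sub (integrableOn_const hF.ne)) hk.aestronglyMeasurable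
      (Eventually.of_forall fun y => (Real.norm_of_nonneg (hk0 y)).trans_le (hkM y)))
    fun y hy => by simp [hkF y hy]

theorem abs_integral_mul_sub_const_le (hk0 : ∀ y, 0 ≤ k y) (hkM : ∀ y, k y ≤ M)
    (hkF : ∀ y ∉ F, k y = 0) (hF : μ F < ⊤) {f : G → ℝ} (hf : IntegrableOn f F μ) (c : ℝ) :
    |∫ y, k y * (f y - c) ∂μ| ≤ M * ∫ y in F, |f y| ∂μ + M * μ.real F * |c| := by
  have hc : IntegrableOn (fun _ => M * |c|) F μ := integrableOn_const hF.ne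
  rw [← setIntegral_eq_integral_of_forall_compl_eq_zero (f := fun y => k y * (f y - c))
    fun y hy => by simp [hkF y hy]]
  calc |∫ y in F, k y * (f y - c) ∂μ| ≤ ∫ y in F, (M * |f y| + M * |c|) ∂μ := by
        refine norm_integral_le_of_norm_le (f := fun y => k y * (f y - c))
          ((hf.abs.const_mul M).add hc) (Eventually.of_forall fun y => ?_)
        rw [Real.norm_eq_abs, abs_mul, abs_of_nonneg (hk0 y), ← mul_add]
        exact mul_le_mul (hkM y) (abs_sub _ _) (abs_nonneg _) ((hk0 y).trans (hkM y))
    _ = M * ∫ y in F, |f y| ∂μ + M * μ.real F * |c| := by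
        rw [integral_add (hf.abs.const_mul M) hc, integral_const_mul, setIntegral_const,
          smul_eq_mul]
        ring

end Kernel

section Flux

variable {G : Type*} [MeasurableSpace G] {μ : Measure G} {Ω F : Set G} {K : G → G → ℝ}
  {g w v : G → ℝ → ℝ} {x : G} {M : ℝ}

noncomputable def nonlocalFlux (μ : Measure G) (K : G → G → ℝ) (w : G → ℝ → ℝ) (x : G)
    (r : ℝ) : ℝ :=
  ∫ y, K x y * (w y r - w x r) ∂μ

theorem nonlocalT_of_mem (hx : x ∈ Ω) (t : ℝ) :
    nonlocalT μ Ω K g w x t = w x 0 + ∫ r in (0:ℝ)..t, nonlocalFlux μ K w x r :=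
  if_pos hx

theorem nonlocalFlux_sub {r : ℝ} (hw : Integrable (fun y => K x y * (w y r - w x r)) μ)
    (hv : Integrable (fun y => K x y * (v y r - v x r)) μ) :
    nonlocalFlux μ K w x r - nonlocalFlux μ K v x r =
      nonlocalFlux μ K (fun y s => w y s - v y s) x r := by
  rw [nonlocalFlux, nonlocalFlux, ← integral_sub hw hv]
  congr 1 with y
  ring

theorem intervalIntegrable_nonlocalFlux (hK : Measurable (K x)) (hK0 : ∀ y, 0 ≤ K x y)
    (hKM : ∀ y, K x y ≤ M) (hKF : ∀ y ∉ F, K x y = 0) (hF : μ F < ⊤) (hM : 0 ≤ M)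
    (hw : Measurable (fun p : G × ℝ => w p.1 p.2)) {a b B : ℝ} (hab : a ≤ b)
    (hwx : IntegrableOn (w x) (Ioc a b)) (hwF : ∀ r ∈ Ioc a b, IntegrableOn (fun y => w y r) F μ)
    (hB : ∀ r ∈ Ioc a b, ∫ y in F, |w y r| ∂μ ≤ B) :
    IntervalIntegrable (nonlocalFlux μ K w x) volume a b := by
  have : IsFiniteMeasure (μ.restrict F) := isFiniteMeasure_restrict.2 hF.ne
  -- `μ` need not be s-finite, so Fubini-type measurability is applied to `μ.restrict F`.
  have hmeas : StronglyMeasurable (nonlocalFlux μ K w x) := by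
    have hF_eq : nonlocalFlux μ K w x = fun r => ∫ y in F, K x y * (w y r - w x r) ∂μ :=
      funext fun r => (setIntegral_eq_integral_of_forall_compl_eq_zero fun y hy => by
        simp [hKF y hy]).symm
    rw [hF_eq]
    refine StronglyMeasurable.integral_prod_right (f := fun r y => K x y * (w y r - w x r)) ?_
    exact ((hK.comp measurable_snd).mul ((hw.comp (measurable_snd.prodMk measurable_fst)).sub
      (hw.comp (measurable_const.prodMk measurable_fst)))).stronglyMeasurable
  have hdom : IntegrableOn (fun r => M * B + M * μ.real F * |w x r|) (Ioc a b) :=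
    (integrableOn_const (by simp)).add (hwx.abs.const_mul _)
  rw [intervalIntegrable_iff_integrableOn_Ioc_of_le hab]
  refine Integrable.mono' hdom hmeas.aestronglyMeasurable
    (ae_restrict_of_forall_mem measurableSet_Ioc fun r hr => ?_)
  calc ‖nonlocalFlux μ K w x r‖ ≤ M * ∫ y in F, |w y r| ∂μ + M * μ.real F * |w x r| :=
        abs_integral_mul_sub_const_le hK0 hKM hKF hF (hwF r hr) _
    _ ≤ M * B + M * μ.real F * |w x r| := by gcongr; exact hB r hr

end Flux

section XSpace

variable {G : Type*} [MeasurableSpace G] {μ : Measure G} {Ω : Set G} {t₀ : ℝ}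
  {g g' w v : G → ℝ → ℝ}

theorem tripleNorm_nonneg : 0 ≤ tripleNorm μ Ω t₀ w :=
  Real.iSup_nonneg fun _ => integral_nonneg fun _ => abs_nonneg _

theorem tripleNorm_le (ht₀ : 0 ≤ t₀) {B : ℝ} (h : ∀ t ∈ Icc 0 t₀, ∫ x in Ω, |w x t| ∂μ ≤ B) :
    tripleNorm μ Ω t₀ w ≤ B :=
  have : Nonempty (Icc (0:ℝ) t₀) := ⟨⟨0, left_mem_Icc.2 ht₀⟩⟩
  ciSup_le fun t => h t t.2

namespace MemX

theorem bddAbove (hw : MemX μ Ω g t₀ w) :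
    BddAbove (range fun t : Icc (0:ℝ) t₀ => ∫ x in Ω, |w x t| ∂μ) := by
  simpa only [image_eq_range] using
    isCompact_Icc.bddAbove_image (continuousOn_setIntegral_abs hw.2.2.1 hw.2.2.2)

theorem integral_abs_le_tripleNorm (hw : MemX μ Ω g t₀ w) {t : ℝ} (ht : t ∈ Icc 0 t₀) :
    ∫ x in Ω, |w x t| ∂μ ≤ tripleNorm μ Ω t₀ w :=
  le_ciSup hw.bddAbove (⟨t, ht⟩ : Icc (0:ℝ) t₀)

theorem sub (hw : MemX μ Ω g t₀ w) (hv : MemX μ Ω g' t₀ v) :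
    MemX μ Ω (fun x t => g x t - g' x t) t₀ (fun x t => w x t - v x t) := by
  obtain ⟨hwm, hwg, hwi, hwc⟩ := hw
  obtain ⟨hvm, hvg, hvi, hvc⟩ := hv
  refine ⟨hwm.sub hvm, fun x hx t ht => by simp only [hwg x hx t ht, hvg x hx t ht],
    fun t ht => (hwi t ht).sub (hvi t ht), fun s hs => ?_⟩
  refine squeeze_zero' (Eventually.of_forall fun t => integral_nonneg fun x => abs_nonneg _) ?_
    (by simpa using (hwc s hs).add (hvc s hs))
  filter_upwards [self_mem_nhdsWithin] with t ht
  have hw' : IntegrableOn (fun x => |w x t - w x s|) Ω μ := ((hwi t ht).sub (hwi s hs)).abs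
  have hv' : IntegrableOn (fun x => |v x t - v x s|) Ω μ := ((hvi t ht).sub (hvi s hs)).abs
  rw [← integral_add hw' hv']
  refine integral_mono (((hwi t ht).sub (hvi t ht)).sub ((hwi s hs).sub (hvi s hs))).abs
    (hw'.add hv') fun x => ?_
  calc |w x t - v x t - (w x s - v x s)| = |(w x t - w x s) - (v x t - v x s)| := by ring_nf
    _ ≤ |w x t - w x s| + |v x t - v x s| := abs_sub _ _

theorem integrableOn {F : Set G} {C t : ℝ} (hw : MemX μ Ω g t₀ w)
    (hΩ : MeasurableSet Ω) (hF : MeasurableSet F) (hFΩ : μ (F \ Ω) < ⊤)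
    (hC : ∀ y s, |g y s| ≤ C) (ht : t ∈ Icc 0 t₀) : IntegrableOn (fun y => w y t) F μ :=
  integrableOn_of_abs_le_of_notMem (f := fun y => w y t) hΩ hF hFΩ
    (Measurable.of_uncurry_right (f := w) hw.1).aestronglyMeasurable (hw.2.2.1 t ht)
    fun y hy => hw.2.1 y hy t ht ▸ hC y t

theorem setIntegral_abs_le {F : Set G} {C t : ℝ} (hw : MemX μ Ω g t₀ w)
    (hΩ : MeasurableSet Ω) (hF : MeasurableSet F) (hFΩ : μ (F \ Ω) < ⊤)
    (hC : ∀ y s, |g y s| ≤ C) (ht : t ∈ Icc 0 t₀) :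
    ∫ y in F, |w y t| ∂μ ≤ tripleNorm μ Ω t₀ w + C * μ.real (F \ Ω) :=
  (setIntegral_abs_le_of_abs_le_of_notMem (f := fun y => w y t) hΩ hF hFΩ
    (Measurable.of_uncurry_right (f := w) hw.1).aestronglyMeasurable (hw.2.2.1 t ht)
    fun y hy => hw.2.1 y hy t ht ▸ hC y t).trans
    (add_le_add (hw.integral_abs_le_tripleNorm ht) le_rfl)

theorem integrable_prod [SFinite (μ.restrict Ω)] (hw : MemX μ Ω g t₀ w) :
    Integrable (fun p : G × ℝ => w p.1 p.2) ((μ.restrict Ω).prod (volume.restrict (Ioc 0 t₀))) := by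
  refine (integrable_prod_iff' hw.1.aestronglyMeasurable).2 ⟨?_, ?_⟩
  · exact ae_restrict_of_forall_mem measurableSet_Ioc fun t ht =>
      hw.2.2.1 t (Ioc_subset_Icc_self ht)
  · refine Measure.integrableOn_of_bounded (M := tripleNorm μ Ω t₀ w) (by simp)
      (StronglyMeasurable.integral_prod_left (f := fun x t => ‖w x t‖)
        hw.1.norm.stronglyMeasurable).aestronglyMeasurable
      (ae_restrict_of_forall_mem measurableSet_Ioc fun t ht => ?_)
    rw [Real.norm_of_nonneg (integral_nonneg fun _ => norm_nonneg _)]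
    simpa only [Real.norm_eq_abs] using hw.integral_abs_le_tripleNorm (Ioc_subset_Icc_self ht)

theorem integral_integral_abs_le [SFinite (μ.restrict Ω)] (hw : MemX μ Ω g t₀ w) (ht₀ : 0 ≤ t₀) :
    ∫ x in Ω, (∫ r in Ioc 0 t₀, |w x r|) ∂μ ≤ t₀ * tripleNorm μ Ω t₀ w := by
  rw [integral_integral_swap (f := fun x r => |w x r|) hw.integrable_prod.abs]
  calc ∫ r in Ioc 0 t₀, ∫ x in Ω, |w x r| ∂μ ≤ ∫ _ in Ioc 0 t₀, tripleNorm μ Ω t₀ w :=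
        integral_mono_of_nonneg
          (Eventually.of_forall fun _ => integral_nonneg fun _ => abs_nonneg _)
          (integrableOn_const (by simp)) (ae_restrict_of_forall_mem measurableSet_Ioc fun r hr =>
            hw.integral_abs_le_tripleNorm (Ioc_subset_Icc_self hr))
    _ = t₀ * tripleNorm μ Ω t₀ w := by
        rw [setIntegral_const, Real.volume_real_Ioc_of_le ht₀, smul_eq_mul, sub_zero]

end MemX

end XSpace

section Estimate

variable {G : Type*} [MeasurableSpace G] {μ : Measure G} {Ω F : Set G} {K : G → G → ℝ}
  {g w v : G → ℝ → ℝ} {M C t₀ : ℝ}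

theorem abs_nonlocalT_sub_le (hΩ : MeasurableSet Ω) (hF : MeasurableSet F) (hFfin : μ F < ⊤)
    {x : G} (hK : Measurable (K x)) (hK0 : ∀ y, 0 ≤ K x y) (hKM : ∀ y, K x y ≤ M)
    (hKF : ∀ y ∉ F, K x y = 0) (hM : 0 ≤ M) (hC : ∀ y s, |g y s| ≤ C)
    (hw : MemX μ Ω g t₀ w) (hv : MemX μ Ω g t₀ v) (hx : x ∈ Ω)
    (hwx : IntegrableOn (w x) (Ioc 0 t₀)) (hvx : IntegrableOn (v x) (Ioc 0 t₀))
    {t : ℝ} (ht : t ∈ Icc 0 t₀) :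
    |nonlocalT μ Ω K g w x t - nonlocalT μ Ω K g v x t| ≤
      |w x 0 - v x 0| + M * tripleNorm μ Ω t₀ (fun y s => w y s - v y s) * t₀ +
        M * μ.real F * ∫ r in Ioc 0 t₀, |w x r - v x r| := by
  have hFΩ : μ (F \ Ω) < ⊤ := (measure_mono sdiff_subset).trans_lt hFfin
  have hu : MemX μ Ω (fun _ _ => 0) t₀ (fun y s => w y s - v y s) := by simpa using hw.sub hv
  have hIoc : Ioc 0 t ⊆ Icc 0 t₀ := Ioc_subset_Icc_self.trans (Icc_subset_Icc_right ht.2)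
  have hflux : ∀ f, MemX μ Ω g t₀ f → IntegrableOn (f x) (Ioc 0 t₀) →
      IntervalIntegrable (nonlocalFlux μ K f x) volume 0 t := fun f hf hfx =>
    intervalIntegrable_nonlocalFlux hK hK0 hKM hKF hFfin hM hf.1 ht.1
      (hfx.mono_set (Ioc_subset_Ioc_right ht.2))
      (fun r hr => hf.integrableOn hΩ hF hFΩ hC (hIoc hr))
      (fun r hr => hf.setIntegral_abs_le hΩ hF hFΩ hC (hIoc hr))
  have hbound := abs_intervalIntegral_le_of_abs_le (J := fun r =>
      nonlocalFlux μ K w x r - nonlocalFlux μ K v x r) (c := fun r => w x r - v x r) ht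
    (mul_nonneg hM tripleNorm_nonneg) (mul_nonneg hM measureReal_nonneg) (hwx.sub hvx)
    fun r hr => by
      have hwF := hw.integrableOn hΩ hF hFΩ hC (hIoc hr)
      have hvF := hv.integrableOn hΩ hF hFΩ hC (hIoc hr)
      rw [nonlocalFlux_sub (integrable_mul_sub_const hK hK0 hKM hKF hFfin hwF _)
        (integrable_mul_sub_const hK hK0 hKM hKF hFfin hvF _)]
      refine (abs_integral_mul_sub_const_le hK0 hKM hKF hFfin (hwF.sub hvF) _).trans ?_
      gcongr
      simpa using hu.setIntegral_abs_le hΩ hF hFΩ (C := 0) (by simp) (hIoc hr)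
  rw [nonlocalT_of_mem hx, nonlocalT_of_mem hx, add_sub_add_comm,
    ← intervalIntegral.integral_sub (hflux w hw hwx) (hflux v hv hvx), add_assoc]
  rw [sub_zero] at hbound
  exact (abs_add_le _ _).trans (add_le_add le_rfl hbound)

theorem setIntegral_abs_nonlocalT_sub_le (hΩ : MeasurableSet Ω) (hF : MeasurableSet F)
    (hΩfin : μ Ω < ⊤) (hFfin : μ F < ⊤) (hK : ∀ x, Measurable (K x)) (hK0 : ∀ x y, 0 ≤ K x y)
    (hKM : ∀ x y, K x y ≤ M) (hKF : ∀ x, ∀ y ∉ F, K x y = 0) (hM : 0 ≤ M)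
    (hC : ∀ y s, |g y s| ≤ C) (hw : MemX μ Ω g t₀ w) (hv : MemX μ Ω g t₀ v) (ht₀ : 0 ≤ t₀)
    {t : ℝ} (ht : t ∈ Icc 0 t₀) :
    ∫ x in Ω, |nonlocalT μ Ω K g w x t - nonlocalT μ Ω K g v x t| ∂μ ≤
      M * (μ.real Ω + μ.real F) * t₀ * tripleNorm μ Ω t₀ (fun y s => w y s - v y s) +
        ∫ x in Ω, |w x 0 - v x 0| ∂μ := by
  have : IsFiniteMeasure (μ.restrict Ω) := isFiniteMeasure_restrict.2 hΩfin.ne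
  set N := tripleNorm μ Ω t₀ (fun y s => w y s - v y s)
  have hu : MemX μ Ω (fun _ _ => 0) t₀ (fun y s => w y s - v y s) := by simpa using hw.sub hv
  have hu0 : IntegrableOn (fun x => |w x 0 - v x 0|) Ω μ := (hu.2.2.1 0 (left_mem_Icc.2 ht₀)).abs
  have hN : IntegrableOn (fun _ => M * N * t₀) Ω μ := integrableOn_const hΩfin.ne
  have hI : IntegrableOn (fun x => ∫ r in Ioc 0 t₀, |w x r - v x r|) Ω μ := by
    simpa only [IntegrableOn, Real.norm_eq_abs] using hu.integrable_prod.integral_norm_prod_left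
  have hII : ∫ x in Ω, (∫ r in Ioc 0 t₀, |w x r - v x r|) ∂μ ≤ t₀ * N :=
    hu.integral_integral_abs_le ht₀
  calc ∫ x in Ω, |nonlocalT μ Ω K g w x t - nonlocalT μ Ω K g v x t| ∂μ
      ≤ ∫ x in Ω, (|w x 0 - v x 0| + M * N * t₀ +
          M * μ.real F * ∫ r in Ioc 0 t₀, |w x r - v x r|) ∂μ := by
        refine integral_mono_of_nonneg (Eventually.of_forall fun _ => abs_nonneg _)
          ((hu0.add hN).add (hI.const_mul _)) ?_
        filter_upwards [ae_restrict_mem hΩ, hw.integrable_prod.prod_right_ae,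
          hv.integrable_prod.prod_right_ae] with x hx hwx hvx
        exact abs_nonlocalT_sub_le hΩ hF hFfin (hK x) (hK0 x) (hKM x) (hKF x) hM hC hw hv hx
          hwx hvx ht
    _ = ∫ x in Ω, |w x 0 - v x 0| ∂μ + M * N * t₀ * μ.real Ω +
          M * μ.real F * ∫ x in Ω, (∫ r in Ioc 0 t₀, |w x r - v x r|) ∂μ := by
        rw [integral_add (f := fun x => |w x 0 - v x 0| + M * N * t₀) (hu0.add hN)
          (hI.const_mul _), integral_add hu0 hN, setIntegral_const,
          integral_const_mul, smul_eq_mul, mul_comm (μ.real Ω)]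
    _ ≤ M * (μ.real Ω + μ.real F) * t₀ * N + ∫ x in Ω, |w x 0 - v x 0| ∂μ := by
        have := mul_le_mul_of_nonneg_left hII (mul_nonneg hM (measureReal_nonneg (μ := μ) (s := F)))
        linarith

end Estimate

theorem stmt0_general {G : Type*} [MeasurableSpace G] (μ : Measure G) (Ω F' : Set G)
    (hΩm : MeasurableSet Ω) (hF'm : MeasurableSet F')
    (hΩfin : μ Ω < ⊤) (hF'fin : μ F' < ⊤)
    (K : G → G → ℝ) (hKmeas : Measurable (fun p : G × G => K p.1 p.2))
    (hKnonneg : ∀ x y, 0 ≤ K x y)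
    (hKsupp : ∀ x y, (x, y) ∉ Ω ×ˢ F' → K x y = 0)
    (M : ℝ) (hM : 0 < M) (hKle : ∀ x y, K x y ≤ M)
    (g : G → ℝ → ℝ)
    (hgbdd : ∃ C, ∀ x t, |g x t| ≤ C)
    (t₀ : ℝ) (ht₀ : 0 < t₀)
    (w v : G → ℝ → ℝ) (hw : MemX μ Ω g t₀ w) (hv : MemX μ Ω g t₀ v) :
    tripleNorm μ Ω t₀ (fun x t => nonlocalT μ Ω K g w x t - nonlocalT μ Ω K g v x t) ≤
      M * ((μ Ω).toReal + (μ F').toReal) * t₀ *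
        tripleNorm μ Ω t₀ (fun x t => w x t - v x t) +
      ∫ x in Ω, |w x 0 - v x 0| ∂μ := by
  obtain ⟨C, hC⟩ := hgbdd
  have hKF : ∀ x, ∀ y ∉ F', K x y = 0 := fun x y hy => hKsupp x y fun h => hy h.2
  refine tripleNorm_le ht₀.le fun t ht => ?_
  simpa only [measureReal_def] using setIntegral_abs_nonlocalT_sub_le hΩm hF'm hΩfin hF'fin
    (fun _ => Measurable.of_uncurry_left (f := K) hKmeas) hKnonneg hKle hKF hM.le hC
    hw hv ht₀.le ht

/-- For `w, v ∈ X_{t₀}`, the operator `𝔗` satisfies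
`|||𝔗(w) − 𝔗(v)||| ≤ M(μ(Ω)+μ(F′)) t₀ |||w − v||| + ‖w(·,0) − v(·,0)‖_{L¹(Ω)}`. -/
theorem stmt0 {G : Type*} [MeasurableSpace G] (μ : Measure G) (Ω F' : Set G)
    (hΩm : MeasurableSet Ω) (hF'm : MeasurableSet F')
    (hΩfin : μ Ω < ⊤) (hF'fin : μ F' < ⊤)
    (K : G → G → ℝ) (hKmeas : Measurable (fun p : G × G => K p.1 p.2))
    (hKnonneg : ∀ x y, 0 ≤ K x y)
    (hKsupp : ∀ x y, (x, y) ∉ Ω ×ˢ F' → K x y = 0)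
    (M : ℝ) (hM : 0 < M) (hKle : ∀ x y, K x y ≤ M)
    (g : G → ℝ → ℝ) (hgmeas : Measurable (fun p : G × ℝ => g p.1 p.2))
    (hgbdd : ∃ C, ∀ x t, |g x t| ≤ C)
    (t₀ : ℝ) (ht₀ : 0 < t₀)
    (w v : G → ℝ → ℝ) (hw : MemX μ Ω g t₀ w) (hv : MemX μ Ω g t₀ v) :
    tripleNorm μ Ω t₀ (fun x t => nonlocalT μ Ω K g w x t - nonlocalT μ Ω K g v x t) ≤
      M * ((μ Ω).toReal + (μ F').toReal) * t₀ *
        tripleNorm μ Ω t₀ (fun x t => w x t - v x t) +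
      ∫ x in Ω, |w x 0 - v x 0| ∂μ :=
  stmt0_general μ Ω F' hΩm hF'm hΩfin hF'fin K hKmeas hKnonneg hKsupp M hM hKle g hgbdd t₀ ht₀ w v
    hw hv
end

section
/- Suppose u₀ ≥ 0 on Ω and g ≥ 0 on (G ∖ Ω) × (0,T]. If u is a supersolution of the nonlocal Dirichlet problem with data (u₀, g), then u(x,t) ≥ 0 for all (x,t) ∈ cl(Ω) × [0,T]. -/
/-!
For `ε > 0` the function `v = u + ε t` attains its minimum over the compact set
`cl(Ω) × [0,T]`. Where `u` is negative, `v` cannot be minimal on the parabolic boundary,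
since `u ≥ 0` there: off `Ω` because `g ≥ 0`, and at `t = 0` on `cl(Ω)` because `u₀ ≥ 0`
and `u` is continuous. At a minimum `(x₀, t₀)` with `x₀ ∈ Ω`, `t₀ > 0` and
`u(x₀, t₀) < 0`, the point `x₀` minimises `u(·, t₀)` over all of `G`, so the nonlocal
term is `≥ 0`, while `t₀` minimises `v(x₀, ·)` on `[0, t₀]`, so `∂ₜu(x₀, t₀) ≤ -ε < 0`,
contradicting the supersolution inequality. Hence `u + ε t ≥ 0`, and `ε → 0` gives `u ≥ 0`.
-/

open MeasureTheory Set

/-- `u` is a supersolution of the nonlocal Dirichlet problem with data `(u₀, g)`: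
bounded, measurable, continuous on `cl(Ω) × [0,T]`, differentiable in `t` on `(0,T]`
for each `x ∈ Ω` with `∂ₜu(x,t) ≥ ∫ K(x,y)(u(y,t) − u(x,t)) dμ(y)`, `u ≥ g` off `Ω`
and `u(·,0) ≥ u₀` on `Ω`. -/
def IsSupersolutionNL {G : Type*} [MetricSpace G] [MeasurableSpace G]
    (μ : Measure G) (Ω : Set G) (K : G → G → ℝ) (T : ℝ)
    (u₀ : G → ℝ) (g : G → ℝ → ℝ) (u : G → ℝ → ℝ) : Prop :=
  (∃ C, ∀ x t, |u x t| ≤ C) ∧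
  Measurable (fun p : G × ℝ => u p.1 p.2) ∧
  ContinuousOn (fun p : G × ℝ => u p.1 p.2) (closure Ω ×ˢ Icc 0 T) ∧
  (∀ x ∈ Ω, ∀ t ∈ Ioc (0:ℝ) T, ∃ d : ℝ,
    HasDerivWithinAt (fun s => u x s) d (Icc (0:ℝ) T) t ∧
    (∫ y, K x y * (u y t - u x t) ∂μ) ≤ d) ∧
  (∀ x ∉ Ω, ∀ t ∈ Ioc (0:ℝ) T, g x t ≤ u x t) ∧
  (∀ x ∈ Ω, u₀ x ≤ u x 0)

/-- `u` is a subsolution: as for supersolutions, with all inequalities reversed. -/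
def IsSubsolutionNL {G : Type*} [MetricSpace G] [MeasurableSpace G]
    (μ : Measure G) (Ω : Set G) (K : G → G → ℝ) (T : ℝ)
    (u₀ : G → ℝ) (g : G → ℝ → ℝ) (u : G → ℝ → ℝ) : Prop :=
  (∃ C, ∀ x t, |u x t| ≤ C) ∧
  Measurable (fun p : G × ℝ => u p.1 p.2) ∧
  ContinuousOn (fun p : G × ℝ => u p.1 p.2) (closure Ω ×ˢ Icc 0 T) ∧
  (∀ x ∈ Ω, ∀ t ∈ Ioc (0:ℝ) T, ∃ d : ℝ,
    HasDerivWithinAt (fun s => u x s) d (Icc (0:ℝ) T) t ∧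
    d ≤ ∫ y, K x y * (u y t - u x t) ∂μ) ∧
  (∀ x ∉ Ω, ∀ t ∈ Ioc (0:ℝ) T, u x t ≤ g x t) ∧
  (∀ x ∈ Ω, u x 0 ≤ u₀ x)

/-- `u` is a solution: simultaneously a super- and a subsolution. -/
def IsSolutionNL {G : Type*} [MetricSpace G] [MeasurableSpace G]
    (μ : Measure G) (Ω : Set G) (K : G → G → ℝ) (T : ℝ)
    (u₀ : G → ℝ) (g : G → ℝ → ℝ) (u : G → ℝ → ℝ) : Prop :=
  IsSupersolutionNL μ Ω K T u₀ g u ∧ IsSubsolutionNL μ Ω K T u₀ g u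

theorem IsMinOn.hasDerivWithinAt_nonpos_Icc {f : ℝ → ℝ} {a b d : ℝ}
    (hmin : IsMinOn f (Icc a b) b) (hf : HasDerivWithinAt f d (Icc a b) b) (hab : a < b) :
    d ≤ 0 := by
  have hcone : a - b ∈ posTangentConeAt (Icc a b) b :=
    sub_mem_posTangentConeAt_of_segment_subset <|
      (convex_Icc a b).segment_subset (right_mem_Icc.2 hab.le) (left_mem_Icc.2 hab.le)
  have h := hmin.localize.hasFDerivWithinAt_nonneg hf.hasFDerivWithinAt hcone
  simp only [ContinuousLinearMap.toSpanSingleton_apply, smul_eq_mul] at h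
  exact nonpos_of_mul_nonneg_right h (sub_neg.2 hab)

namespace IsSupersolutionNL

variable {G : Type*} [MetricSpace G] [MeasurableSpace G] {μ : Measure G} {Ω : Set G}
  {K : G → G → ℝ} {T : ℝ} {u₀ : G → ℝ} {g : G → ℝ → ℝ} {u : G → ℝ → ℝ}

theorem nonneg_of_notMem (hu : IsSupersolutionNL μ Ω K T u₀ g u)
    (hg : ∀ x ∉ Ω, ∀ t ∈ Ioc (0:ℝ) T, 0 ≤ g x t) {x : G} (hx : x ∉ Ω) {t : ℝ}
    (ht : t ∈ Ioc 0 T) : 0 ≤ u x t := by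
  obtain ⟨-, -, -, -, hbdry, -⟩ := hu
  exact (hg x hx t ht).trans (hbdry x hx t ht)

theorem nonneg_initial (hu : IsSupersolutionNL μ Ω K T u₀ g u) (hu₀ : ∀ x ∈ Ω, 0 ≤ u₀ x)
    (hT : 0 ≤ T) {x : G} (hx : x ∈ closure Ω) : 0 ≤ u x 0 := by
  obtain ⟨-, -, hcont, -, -, hinit⟩ := hu
  have hcont₀ : ContinuousOn (fun y => u y 0) (closure Ω) :=
    hcont.comp (continuous_id.prodMk continuous_const).continuousOn
      fun y hy => ⟨hy, left_mem_Icc.2 hT⟩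
  exact ContinuousWithinAt.closure_le hx continuousWithinAt_const
    ((hcont₀ x hx).mono subset_closure) fun y hy => (hu₀ y hy).trans (hinit y hy)

theorem add_mul_nonneg (hu : IsSupersolutionNL μ Ω K T u₀ g u)
    (hΩc : IsCompact (closure Ω)) (hK : ∀ x y, 0 ≤ K x y) (hu₀ : ∀ x ∈ Ω, 0 ≤ u₀ x)
    (hg : ∀ x ∉ Ω, ∀ t ∈ Ioc (0:ℝ) T, 0 ≤ g x t) {ε : ℝ} (hε : 0 < ε)
    {x : G} (hx : x ∈ closure Ω) {t : ℝ} (ht : t ∈ Icc 0 T) : 0 ≤ u x t + ε * t := by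
  obtain ⟨⟨x₀, t₀⟩, ⟨hx₀, ht₀⟩, hmin⟩ := (hΩc.prod isCompact_Icc).exists_isMinOn
    (f := fun p : G × ℝ => u p.1 p.2 + ε * p.2) ⟨(x, t), hx, ht⟩
    (hu.2.2.1.add (continuous_const.mul continuous_snd).continuousOn)
  rw [isMinOn_iff] at hmin
  refine le_trans ?_ (hmin (x, t) ⟨hx, ht⟩)
  by_contra! hneg
  have hu_neg : u x₀ t₀ < 0 := by nlinarith [ht₀.1]
  have ht₀pos : 0 < t₀ := ht₀.1.lt_of_ne' fun h => by
    subst h; exact hu_neg.not_ge (hu.nonneg_initial hu₀ ht₀.2 hx₀)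
  have hx₀Ω : x₀ ∈ Ω := by
    by_contra h
    exact hu_neg.not_ge (hu.nonneg_of_notMem hg h ⟨ht₀pos, ht₀.2⟩)
  obtain ⟨d, hd, hdge⟩ := hu.2.2.2.1 x₀ hx₀Ω t₀ ⟨ht₀pos, ht₀.2⟩
  have hspace : ∀ y, u x₀ t₀ ≤ u y t₀ := fun y => by
    by_cases hy : y ∈ closure Ω
    · simpa using hmin (y, t₀) ⟨hy, ht₀⟩
    · exact hu_neg.le.trans (hu.nonneg_of_notMem hg (fun h => hy (subset_closure h))
        ⟨ht₀pos, ht₀.2⟩)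
  have hnonlocal : 0 ≤ ∫ y, K x₀ y * (u y t₀ - u x₀ t₀) ∂μ :=
    integral_nonneg fun y => mul_nonneg (hK x₀ y) (sub_nonneg.2 (hspace y))
  have htime : IsMinOn (fun s => u x₀ s + ε * s) (Icc 0 t₀) t₀ := fun s hs =>
    hmin (x₀, s) ⟨hx₀, hs.1, hs.2.trans ht₀.2⟩
  have hderiv : HasDerivWithinAt (fun s => u x₀ s + ε * s) (d + ε) (Icc 0 t₀) t₀ :=
    (hd.mono (Icc_subset_Icc le_rfl ht₀.2)).add
      (by simpa using (hasDerivWithinAt_id _ _).const_mul ε)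
  linarith [htime.hasDerivWithinAt_nonpos_Icc hderiv ht₀pos]

end IsSupersolutionNL

theorem stmt3_general {G : Type*} [MetricSpace G] [MeasurableSpace G]
    (μ : Measure G) (Ω : Set G)
    (hΩc : IsCompact (closure Ω))
    (K : G → G → ℝ) (hK0 : ∀ x y, 0 ≤ K x y)
    (T : ℝ)
    (g : G → ℝ → ℝ)
    (u₀ : G → ℝ)
    (hu₀pos : ∀ x ∈ Ω, 0 ≤ u₀ x)
    (hgpos : ∀ x ∉ Ω, ∀ t ∈ Ioc (0:ℝ) T, 0 ≤ g x t)
    (u : G → ℝ → ℝ) (hu : IsSupersolutionNL μ Ω K T u₀ g u) :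
    ∀ x ∈ closure Ω, ∀ t ∈ Icc (0:ℝ) T, 0 ≤ u x t := by
  intro x hx t ht
  refine le_of_forall_pos_le_add fun δ hδ => ?_
  have ht1 : 0 < t + 1 := by linarith [ht.1]
  have hv := hu.add_mul_nonneg hΩc hK0 hu₀pos hgpos (div_pos hδ ht1) hx ht
  have hsmall : δ / (t + 1) * t ≤ δ := by
    rw [div_mul_eq_mul_div, div_le_iff₀ ht1]
    nlinarith
  linarith

/-- Nonnegativity of supersolutions with nonnegative data. -/
theorem stmt3 {G : Type*} [MetricSpace G] [MeasurableSpace G] [BorelSpace G]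
    (μ : Measure G) (Ω : Set G) (hΩo : IsOpen Ω) (hΩne : Ω.Nonempty)
    (hΩc : IsCompact (closure Ω))
    (K : G → G → ℝ) (hK0 : ∀ x y, 0 ≤ K x y)
    (hKmeas : Measurable (fun p : G × G => K p.1 p.2))
    (hKint : ∀ x ∈ Ω, Integrable (fun y => K x y) μ)
    (T : ℝ) (hT : 0 < T)
    (g : G → ℝ → ℝ) (hgbdd : ∃ C, ∀ x ∉ Ω, ∀ t ∈ Ioc (0:ℝ) T, |g x t| ≤ C)
    (u₀ : G → ℝ) (hu₀bdd : ∃ C, ∀ x ∈ Ω, |u₀ x| ≤ C)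
    (hu₀pos : ∀ x ∈ Ω, 0 ≤ u₀ x)
    (hgpos : ∀ x ∉ Ω, ∀ t ∈ Ioc (0:ℝ) T, 0 ≤ g x t)
    (u : G → ℝ → ℝ) (hu : IsSupersolutionNL μ Ω K T u₀ g u) :
    ∀ x ∈ closure Ω, ∀ t ∈ Icc (0:ℝ) T, 0 ≤ u x t :=
  stmt3_general μ Ω hΩc K hK0 T g u₀ hu₀pos hgpos u hu
end

section
/- Let u₀, v₀ : Ω → ℝ be bounded with u₀ ≥ v₀ on Ω, and let g, h : (G ∖ Ω) × (0,T] → ℝ be bounded with g ≥ h. If u is a solution of the nonlocal Dirichlet problem with data (u₀, g) and v is a solution with data (v₀, h), then u(x,t) ≥ v(x,t) for all (x,t) ∈ cl(Ω) × [0,T]. -/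
/-!
Set `w = u - v` and perturb it to `w + ε t`, which attains its minimum on the compact set
`cl(Ω) × [0,T]`. A negative minimum can lie neither at `t = 0` nor outside `Ω`, where the data are
ordered, so it sits at some `(x₀, t₀)` with `x₀ ∈ Ω`, `t₀ > 0`, at which `w(·, t₀)` is minimal in
space. As `K ≥ 0`, the nonlocal operator is then at least as large for `u` as for `v`, whence
`∂ₜ w(x₀, t₀) ≥ 0` and `∂ₜ (w + ε t)(x₀, t₀) > 0`, contradicting minimality in time from the left.
Letting `ε → 0` gives `w ≥ 0`.
-/

open MeasureTheory Set

theorem HasDerivWithinAt.nonpos_of_isMinOn_Icc {f : ℝ → ℝ} {d a b t : ℝ}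
    (hf : HasDerivWithinAt f d (Icc a b) t) (hmin : IsMinOn f (Icc a b) t) (ht : t ∈ Ioc a b) :
    d ≤ 0 := by
  have hcone : a - t ∈ posTangentConeAt (Icc a b) t :=
    sub_mem_posTangentConeAt_of_segment_subset <| by
      rw [segment_symm]
      exact (segment_subset_Icc ht.1.le).trans (Icc_subset_Icc_right ht.2)
  have hslope := hmin.localize.hasFDerivWithinAt_nonneg hf.hasFDerivWithinAt hcone
  simp only [ContinuousLinearMap.toSpanSingleton_apply, smul_eq_mul] at hslope
  nlinarith [ht.1]

section NonlocalOperator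

variable {G : Type*} [MeasurableSpace G] {μ : Measure G} {k : G → ℝ}

theorem MeasureTheory.Integrable.mul_sub_const_of_abs_le (hk : Integrable k μ) {f : G → ℝ}
    (hf : AEStronglyMeasurable f μ) {C : ℝ} (hC : ∀ y, |f y| ≤ C) (c : ℝ) :
    Integrable (fun y => k y * (f y - c)) μ := by
  refine hk.mul_bdd (c := C + |c|) (hf.sub aestronglyMeasurable_const) (.of_forall fun y => ?_)
  rw [Real.norm_eq_abs]
  exact (abs_sub _ _).trans (add_le_add_left (hC y) _)

theorem integral_mul_sub_mono (hk0 : ∀ y, 0 ≤ k y) (hk : Integrable k μ) {f g : G → ℝ}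
    (hf : AEStronglyMeasurable f μ) (hg : AEStronglyMeasurable g μ)
    (hfC : ∃ C, ∀ y, |f y| ≤ C) (hgC : ∃ C, ∀ y, |g y| ≤ C) {a b : ℝ}
    (hfg : ∀ y, g y - b ≤ f y - a) :
    ∫ y, k y * (g y - b) ∂μ ≤ ∫ y, k y * (f y - a) ∂μ := by
  obtain ⟨Cf, hCf⟩ := hfC
  obtain ⟨Cg, hCg⟩ := hgC
  exact integral_mono (hk.mul_sub_const_of_abs_le hg hCg b) (hk.mul_sub_const_of_abs_le hf hCf a)
    fun y => mul_le_mul_of_nonneg_left (hfg y) (hk0 y)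

end NonlocalOperator

section MinimumPrinciple

variable {G : Type*} [TopologicalSpace G] {Ω : Set G} {T : ℝ} {w : G → ℝ → ℝ}

theorem nonneg_at_zero_on_closure (hT : 0 < T)
    (hcont : ContinuousOn (fun p : G × ℝ => w p.1 p.2) (closure Ω ×ˢ Icc 0 T))
    (hinit : ∀ x ∈ Ω, 0 ≤ w x 0) (hext : ∀ x ∉ Ω, ∀ t ∈ Ioc 0 T, 0 ≤ w x t) :
    ∀ x ∈ closure Ω, 0 ≤ w x 0 := by
  intro x hx
  by_cases hxΩ : x ∈ Ω
  · exact hinit x hxΩ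
  have hcont_x : ContinuousOn (w x) (Icc 0 T) :=
    hcont.comp (continuous_const.prodMk continuous_id).continuousOn fun t ht => ⟨hx, ht⟩
  have h0 : (0 : ℝ) ∈ closure (Ioc 0 T) := by
    rw [closure_Ioc hT.ne]
    exact ⟨le_rfl, hT.le⟩
  exact ContinuousWithinAt.closure_le h0 continuousWithinAt_const
    ((hcont_x 0 ⟨le_rfl, hT.le⟩).mono Ioc_subset_Icc_self) (hext x hxΩ)

theorem add_mul_nonneg_of_minimum_principle (hΩc : IsCompact (closure Ω))
    (hcont : ContinuousOn (fun p : G × ℝ => w p.1 p.2) (closure Ω ×ˢ Icc 0 T))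
    (hinit : ∀ x ∈ closure Ω, 0 ≤ w x 0) (hext : ∀ x ∉ Ω, ∀ t ∈ Ioc 0 T, 0 ≤ w x t)
    (hmin : ∀ x ∈ Ω, ∀ t ∈ Ioc 0 T, (∀ y, w x t ≤ w y t) →
      ∃ d, HasDerivWithinAt (w x) d (Icc 0 T) t ∧ 0 ≤ d) {ε : ℝ} (hε : 0 < ε) :
    ∀ x ∈ closure Ω, ∀ t ∈ Icc 0 T, 0 ≤ w x t + ε * t := by
  intro x hx t ht
  obtain ⟨⟨x₀, t₀⟩, ⟨hx₀, ht₀⟩, hmin₀⟩ := (hΩc.prod isCompact_Icc).exists_isMinOn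
    (f := fun p : G × ℝ => w p.1 p.2 + ε * p.2) ⟨(x, t), hx, ht⟩
    (hcont.add (continuous_const.mul continuous_snd).continuousOn)
  rw [isMinOn_iff] at hmin₀
  refine le_trans ?_ (hmin₀ (x, t) ⟨hx, ht⟩)
  by_contra! hneg
  change w x₀ t₀ + ε * t₀ < 0 at hneg
  have ht₀pos : 0 < t₀ := by
    refine ht₀.1.lt_of_ne ?_
    rintro rfl
    linarith [hinit x₀ hx₀]
  have ht₀' : t₀ ∈ Ioc 0 T := ⟨ht₀pos, ht₀.2⟩
  have hεt : 0 < ε * t₀ := mul_pos hε ht₀pos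
  have hx₀Ω : x₀ ∈ Ω := by
    by_contra hx₀Ω
    linarith [hext x₀ hx₀Ω t₀ ht₀']
  have hspace : ∀ y, w x₀ t₀ ≤ w y t₀ := by
    intro y
    by_cases hy : y ∈ Ω
    · have := hmin₀ (y, t₀) ⟨subset_closure hy, ht₀⟩
      dsimp only at this
      linarith
    · linarith [hext y hy t₀ ht₀']
  obtain ⟨d, hd, hd0⟩ := hmin x₀ hx₀Ω t₀ ht₀' hspace
  have htime : IsMinOn (fun s => w x₀ s + ε * s) (Icc 0 T) t₀ := fun s hs => hmin₀ (x₀, s) ⟨hx₀, hs⟩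
  have hd_le := (hd.add ((hasDerivWithinAt_id t₀ _).const_mul ε)).nonpos_of_isMinOn_Icc htime ht₀'
  linarith

theorem nonneg_of_minimum_principle (hΩc : IsCompact (closure Ω)) (hT : 0 < T)
    (hcont : ContinuousOn (fun p : G × ℝ => w p.1 p.2) (closure Ω ×ˢ Icc 0 T))
    (hinit : ∀ x ∈ Ω, 0 ≤ w x 0) (hext : ∀ x ∉ Ω, ∀ t ∈ Ioc 0 T, 0 ≤ w x t)
    (hmin : ∀ x ∈ Ω, ∀ t ∈ Ioc 0 T, (∀ y, w x t ≤ w y t) →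
      ∃ d, HasDerivWithinAt (w x) d (Icc 0 T) t ∧ 0 ≤ d) :
    ∀ x ∈ closure Ω, ∀ t ∈ Icc 0 T, 0 ≤ w x t := by
  intro x hx t ht
  have hinit' := nonneg_at_zero_on_closure hT hcont hinit hext
  refine le_of_forall_pos_le_add fun ε hε => ?_
  have hεT : 0 < ε / T := div_pos hε hT
  have hpert := add_mul_nonneg_of_minimum_principle hΩc hcont hinit' hext hmin hεT x hx t ht
  have hεt : ε / T * t ≤ ε := by
    calc ε / T * t ≤ ε / T * T := mul_le_mul_of_nonneg_left ht.2 hεT.le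
      _ = ε := div_mul_cancel₀ ε hT.ne'
  linarith

end MinimumPrinciple

section Comparison

variable {G : Type*} [MetricSpace G] [MeasurableSpace G] {μ : Measure G} {Ω : Set G}
  {K : G → G → ℝ} {T : ℝ} {u₀ v₀ : G → ℝ} {g h u v : G → ℝ → ℝ}

theorem IsSupersolutionNL.exists_hasDerivWithinAt_sub_nonneg
    (hu : IsSupersolutionNL μ Ω K T u₀ g u) (hv : IsSubsolutionNL μ Ω K T v₀ h v)
    (hK0 : ∀ x y, 0 ≤ K x y) (hKint : ∀ x ∈ Ω, Integrable (fun y => K x y) μ) :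
    ∀ x ∈ Ω, ∀ t ∈ Ioc 0 T, (∀ y, u x t - v x t ≤ u y t - v y t) →
      ∃ d, HasDerivWithinAt (fun s => u x s - v x s) d (Icc 0 T) t ∧ 0 ≤ d := by
  obtain ⟨⟨Cu, hCu⟩, hum, -, huPDE, -⟩ := hu
  obtain ⟨⟨Cv, hCv⟩, hvm, -, hvPDE, -⟩ := hv
  intro x hx t ht hspace
  obtain ⟨du, hdu, hdu_ge⟩ := huPDE x hx t ht
  obtain ⟨dv, hdv, hdv_le⟩ := hvPDE x hx t ht
  have hkernel : ∫ y, K x y * (v y t - v x t) ∂μ ≤ ∫ y, K x y * (u y t - u x t) ∂μ :=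
    integral_mul_sub_mono (f := fun y => u y t) (g := fun y => v y t) (hK0 x) (hKint x hx)
      (hum.comp (measurable_id.prodMk measurable_const)).aestronglyMeasurable
      (hvm.comp (measurable_id.prodMk measurable_const)).aestronglyMeasurable
      ⟨Cu, fun y => hCu y t⟩ ⟨Cv, fun y => hCv y t⟩ fun y => by linarith [hspace y]
  exact ⟨du - dv, hdu.sub hdv, by linarith⟩

theorem IsSupersolutionNL.ge_of_isSubsolutionNL (hΩc : IsCompact (closure Ω))
    (hK0 : ∀ x y, 0 ≤ K x y) (hKint : ∀ x ∈ Ω, Integrable (fun y => K x y) μ) (hT : 0 < T)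
    (hdata0 : ∀ x ∈ Ω, v₀ x ≤ u₀ x) (hdata : ∀ x ∉ Ω, ∀ t ∈ Ioc 0 T, h x t ≤ g x t)
    (hu : IsSupersolutionNL μ Ω K T u₀ g u) (hv : IsSubsolutionNL μ Ω K T v₀ h v) :
    ∀ x ∈ closure Ω, ∀ t ∈ Icc 0 T, v x t ≤ u x t := by
  have hderiv := hu.exists_hasDerivWithinAt_sub_nonneg hv hK0 hKint
  obtain ⟨-, -, hucont, -, hug, hu0⟩ := hu
  obtain ⟨-, -, hvcont, -, hvh, hv0⟩ := hv
  intro x hx t ht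
  have hw := nonneg_of_minimum_principle (w := fun x s => u x s - v x s) hΩc hT
    (hucont.sub hvcont) (fun x hx => by linarith [hu0 x hx, hv0 x hx, hdata0 x hx])
    (fun x hx t ht => by linarith [hug x hx t ht, hvh x hx t ht, hdata x hx t ht]) hderiv x hx t ht
  linarith

end Comparison

theorem stmt4_general {G : Type*} [MetricSpace G] [MeasurableSpace G]
    (μ : Measure G) (Ω : Set G)
    (hΩc : IsCompact (closure Ω))
    (K : G → G → ℝ) (hK0 : ∀ x y, 0 ≤ K x y)
    (hKint : ∀ x ∈ Ω, Integrable (fun y => K x y) μ)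
    (T : ℝ) (hT : 0 < T)
    (u₀ v₀ : G → ℝ)
    (hdata0 : ∀ x ∈ Ω, v₀ x ≤ u₀ x)
    (g h : G → ℝ → ℝ)
    (hdata : ∀ x ∉ Ω, ∀ t ∈ Ioc (0:ℝ) T, h x t ≤ g x t)
    (u v : G → ℝ → ℝ)
    (hu : IsSolutionNL μ Ω K T u₀ g u) (hv : IsSolutionNL μ Ω K T v₀ h v) :
    ∀ x ∈ closure Ω, ∀ t ∈ Icc (0:ℝ) T, v x t ≤ u x t :=
  hu.1.ge_of_isSubsolutionNL hΩc hK0 hKint hT hdata0 hdata hv.2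

/-- Comparison principle: solutions with ordered data are ordered. -/
theorem stmt4 {G : Type*} [MetricSpace G] [MeasurableSpace G] [BorelSpace G]
    (μ : Measure G) (Ω : Set G) (hΩo : IsOpen Ω) (hΩne : Ω.Nonempty)
    (hΩc : IsCompact (closure Ω))
    (K : G → G → ℝ) (hK0 : ∀ x y, 0 ≤ K x y)
    (hKmeas : Measurable (fun p : G × G => K p.1 p.2))
    (hKint : ∀ x ∈ Ω, Integrable (fun y => K x y) μ)
    (T : ℝ) (hT : 0 < T)
    (u₀ v₀ : G → ℝ)
    (hu₀bdd : ∃ C, ∀ x ∈ Ω, |u₀ x| ≤ C) (hv₀bdd : ∃ C, ∀ x ∈ Ω, |v₀ x| ≤ C)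
    (hdata0 : ∀ x ∈ Ω, v₀ x ≤ u₀ x)
    (g h : G → ℝ → ℝ)
    (hgbdd : ∃ C, ∀ x ∉ Ω, ∀ t ∈ Ioc (0:ℝ) T, |g x t| ≤ C)
    (hhbdd : ∃ C, ∀ x ∉ Ω, ∀ t ∈ Ioc (0:ℝ) T, |h x t| ≤ C)
    (hdata : ∀ x ∉ Ω, ∀ t ∈ Ioc (0:ℝ) T, h x t ≤ g x t)
    (u v : G → ℝ → ℝ)
    (hu : IsSolutionNL μ Ω K T u₀ g u) (hv : IsSolutionNL μ Ω K T v₀ h v) :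
    ∀ x ∈ closure Ω, ∀ t ∈ Icc (0:ℝ) T, v x t ≤ u x t :=
  stmt4_general μ Ω hΩc K hK0 hKint T hT u₀ v₀ hdata0 g h hdata u v hu hv
end

section
/- Let u₀ : Ω → ℝ and g : (G ∖ Ω) × (0,T] → ℝ be bounded. If u is a supersolution and v is a subsolution of the nonlocal Dirichlet problem with the same data (u₀, g), then u(x,t) ≥ v(x,t) for all (x,t) ∈ cl(Ω) × [0,T]. -/
open MeasureTheory Set

lemma integrable_mul_sub_const_of_abs_le {α : Type*} [MeasurableSpace α] {μ : Measure α}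
    {k f : α → ℝ} (hk : Integrable k μ) (hf : Measurable f) {C : ℝ} (hfC : ∀ y, |f y| ≤ C)
    (c : ℝ) : Integrable (fun y => k y * (f y - c)) μ :=
  hk.mul_bdd (hf.sub measurable_const).aestronglyMeasurable
    (ae_of_all _ fun y => (abs_sub (f y) c).trans (add_le_add_left (hfC y) |c|))

lemma integral_mul_sub_nonpos_of_forall_le {α : Type*} [MeasurableSpace α] {μ : Measure α}
    {k f : α → ℝ} {x : α} (hk : ∀ y, 0 ≤ k y) (hfx : ∀ y, f y ≤ f x) :
    ∫ y, k y * (f y - f x) ∂μ ≤ 0 :=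
  integral_nonpos fun y => mul_nonpos_of_nonneg_of_nonpos (hk y) (sub_nonpos.mpr (hfx y))

lemma HasDerivWithinAt.nonneg_of_isMaxOn_Icc {f : ℝ → ℝ} {d a b t : ℝ}
    (hf : HasDerivWithinAt f d (Icc a b) t) (hmax : IsMaxOn f (Icc a b) t)
    (ht : t ∈ Ioc a b) : 0 ≤ d := by
  have hcone : a - t ∈ posTangentConeAt (Icc a b) t :=
    sub_mem_posTangentConeAt_of_segment_subset <| by
      rw [segment_symm, segment_eq_Icc ht.1.le]
      exact Icc_subset_Icc le_rfl ht.2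
  have hslope := hmax.localize.hasFDerivWithinAt_nonpos hf.hasFDerivWithinAt hcone
  simp only [ContinuousLinearMap.toSpanSingleton_apply, smul_eq_mul] at hslope
  nlinarith [ht.1]

section

variable {G : Type*} [MetricSpace G] [MeasurableSpace G] {μ : Measure G} {Ω : Set G}
  {K : G → G → ℝ} {T : ℝ}

lemma IsSubsolutionNL.sub_supersolution {u₀ : G → ℝ} {g : G → ℝ → ℝ} {u v : G → ℝ → ℝ}
    (hKint : ∀ x ∈ Ω, Integrable (fun y => K x y) μ)
    (hv : IsSubsolutionNL μ Ω K T u₀ g v) (hu : IsSupersolutionNL μ Ω K T u₀ g u) :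
    IsSubsolutionNL μ Ω K T 0 0 (fun x t => v x t - u x t) := by
  obtain ⟨⟨Cv, hCv⟩, hvmeas, hvcont, hvderiv, hvg, hv0⟩ := hv
  obtain ⟨⟨Cu, hCu⟩, humeas, hucont, huderiv, hug, hu0⟩ := hu
  refine ⟨⟨Cv + Cu, fun x t => (abs_sub _ _).trans (add_le_add (hCv x t) (hCu x t))⟩,
    hvmeas.sub humeas, hvcont.sub hucont, fun x hx t ht => ?_,
    fun x hx t ht => by simpa using hvg x hx t ht |>.trans (hug x hx t ht),
    fun x hx => by simpa using (hv0 x hx).trans (hu0 x hx)⟩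
  obtain ⟨dv, hdv, hdv_le⟩ := hvderiv x hx t ht
  obtain ⟨du, hdu, hdu_ge⟩ := huderiv x hx t ht
  have slice {w : G → ℝ → ℝ} (hw : Measurable fun p : G × ℝ => w p.1 p.2) :
      Measurable fun y => w y t :=
    hw.comp (measurable_id.prodMk measurable_const)
  have hsplit : ∫ y, K x y * (v y t - u y t - (v x t - u x t)) ∂μ
      = (∫ y, K x y * (v y t - v x t) ∂μ) - ∫ y, K x y * (u y t - u x t) ∂μ := by
    rw [← integral_sub
      (integrable_mul_sub_const_of_abs_le (hKint x hx) (slice hvmeas) (hCv · t) _)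
      (integrable_mul_sub_const_of_abs_le (hKint x hx) (slice humeas) (hCu · t) _)]
    congr 1 with y
    ring
  exact ⟨dv - du, hdv.sub hdu, by linarith⟩

lemma IsSubsolutionNL.nonpos_at_zero {w : G → ℝ → ℝ} (hT : 0 ≤ T)
    (hw : IsSubsolutionNL μ Ω K T 0 0 w) : ∀ x ∈ closure Ω, w x 0 ≤ 0 := by
  intro x hx
  have hslice : ContinuousOn (fun y => w y 0) (closure Ω) :=
    hw.2.2.1.comp (continuous_id.prodMk continuous_const).continuousOn
      fun y hy => ⟨hy, le_rfl, hT⟩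
  exact ContinuousWithinAt.closure_le hx ((hslice x hx).mono subset_closure)
    continuousWithinAt_const fun y hy => hw.2.2.2.2.2 y hy

lemma IsSubsolutionNL.nonpos_of_zero_data {w : G → ℝ → ℝ} (hΩc : IsCompact (closure Ω))
    (hK0 : ∀ x y, 0 ≤ K x y) (hT : 0 < T) (hw : IsSubsolutionNL μ Ω K T 0 0 w) :
    ∀ x ∈ closure Ω, ∀ t ∈ Icc (0:ℝ) T, w x t ≤ 0 := by
  have hw0 := hw.nonpos_at_zero hT.le
  obtain ⟨-, -, hwcont, hwderiv, hwg, -⟩ := hw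
  by_contra! ⟨x₁, hx₁, t₁, ht₁, hw₁⟩
  set ε := w x₁ t₁ / (2 * T)
  have hε : 0 < ε := by positivity
  have hεT : ε * T = w x₁ t₁ / 2 := by simp only [ε]; field_simp
  have hφ : ContinuousOn (fun p : G × ℝ => w p.1 p.2 - ε * p.2) (closure Ω ×ˢ Icc 0 T) :=
    hwcont.sub (by fun_prop)
  obtain ⟨⟨x₀, t₀⟩, ⟨hx₀, ht₀⟩, hmax⟩ :=
    (hΩc.prod isCompact_Icc).exists_isMaxOn ⟨(x₁, t₁), hx₁, ht₁⟩ hφ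
  have hmax' : ∀ x ∈ closure Ω, ∀ t ∈ Icc 0 T, w x t - ε * t ≤ w x₀ t₀ - ε * t₀ :=
    fun x hx t ht => hmax (a := (x, t)) ⟨hx, ht⟩
  have hpos : ε * t₀ < w x₀ t₀ := by
    nlinarith [hmax' x₁ hx₁ t₁ ht₁, mul_le_mul_of_nonneg_left ht₁.2 hε.le]
  have ht₀pos : 0 < t₀ := by
    refine ht₀.1.lt_of_ne fun h => ?_
    subst h
    linarith [hw0 x₀ hx₀]
  have ht₀' : t₀ ∈ Ioc 0 T := ⟨ht₀pos, ht₀.2⟩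
  have hεt₀ : 0 < w x₀ t₀ := (mul_pos hε ht₀pos).trans hpos
  have hx₀Ω : x₀ ∈ Ω := by
    by_contra hx₀Ω
    exact (hwg x₀ hx₀Ω t₀ ht₀').not_gt hεt₀
  have hglobal : ∀ y, w y t₀ ≤ w x₀ t₀ := by
    intro y
    by_cases hy : y ∈ closure Ω
    · linarith [hmax' y hy t₀ ht₀]
    · exact (hwg y (fun h => hy (subset_closure h)) t₀ ht₀').trans hεt₀.le
  obtain ⟨d, hd, hd_le⟩ := hwderiv x₀ hx₀Ω t₀ ht₀'
  have hd_ge : ε ≤ d := by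
    have hφd := (hd.sub ((hasDerivWithinAt_id t₀ _).const_mul ε)).nonneg_of_isMaxOn_Icc
      (hmax' x₀ hx₀) ht₀'
    linarith
  linarith [integral_mul_sub_nonpos_of_forall_le (μ := μ) (hK0 x₀) hglobal]

end

theorem stmt5_general {G : Type*} [MetricSpace G] [MeasurableSpace G]
    (μ : Measure G) (Ω : Set G)
    (hΩc : IsCompact (closure Ω))
    (K : G → G → ℝ) (hK0 : ∀ x y, 0 ≤ K x y)
    (hKint : ∀ x ∈ Ω, Integrable (fun y => K x y) μ)
    (T : ℝ) (hT : 0 < T)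
    (u₀ : G → ℝ)
    (g : G → ℝ → ℝ)
    (u v : G → ℝ → ℝ)
    (hu : IsSupersolutionNL μ Ω K T u₀ g u) (hv : IsSubsolutionNL μ Ω K T u₀ g v) :
    ∀ x ∈ closure Ω, ∀ t ∈ Icc (0:ℝ) T, v x t ≤ u x t := by
  intro x hx t ht
  have hw := (hv.sub_supersolution hKint hu).nonpos_of_zero_data hΩc hK0 hT
  exact sub_nonpos.mp (hw x hx t ht)

/-- Comparison of super- and subsolutions with the same data. -/
theorem stmt5 {G : Type*} [MetricSpace G] [MeasurableSpace G] [BorelSpace G]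
    (μ : Measure G) (Ω : Set G) (hΩo : IsOpen Ω) (hΩne : Ω.Nonempty)
    (hΩc : IsCompact (closure Ω))
    (K : G → G → ℝ) (hK0 : ∀ x y, 0 ≤ K x y)
    (hKmeas : Measurable (fun p : G × G => K p.1 p.2))
    (hKint : ∀ x ∈ Ω, Integrable (fun y => K x y) μ)
    (T : ℝ) (hT : 0 < T)
    (u₀ : G → ℝ) (hu₀bdd : ∃ C, ∀ x ∈ Ω, |u₀ x| ≤ C)
    (g : G → ℝ → ℝ) (hgbdd : ∃ C, ∀ x ∉ Ω, ∀ t ∈ Ioc (0:ℝ) T, |g x t| ≤ C)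
    (u v : G → ℝ → ℝ)
    (hu : IsSupersolutionNL μ Ω K T u₀ g u) (hv : IsSubsolutionNL μ Ω K T u₀ g v) :
    ∀ x ∈ closure Ω, ∀ t ∈ Icc (0:ℝ) T, v x t ≤ u x t :=
  stmt5_general μ Ω hΩc K hK0 hKint T hT u₀ g u v hu hv
end

section
/- Let a, u : ℝⁿ → ℝ be bounded functions such that the product f = a·u belongs to C²(ℝⁿ) and has α-Hölder second derivatives with constant H. For ε > 0 define ℒ_ε u(x) = (2 / (C(J) ε^{n+2})) ∫_{ℝⁿ} J((x − y)/ε) (a(y)u(y) − a(x)u(x)) dy. Then there exists a constant C, depending only on n, α, H and on ∫_{ℝⁿ} J(y)|y|^{2+α} dy, such that sup_{x ∈ ℝⁿ} |ℒ_ε u(x) − Δ(a u)(x)| ≤ C ε^α for every ε > 0. (This is the abelian instance of the paper's Lemma concerning the Fokker–Planck operator ℒ(v) = Σᵢ Xᵢ Xᵢ (a v), which in ℝⁿ is Δ(a v).) -/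
/-!
Substituting `y = x + ε z` (allowed since `J` is even) turns `ℒ_ε f (x)` into
`2 / (C(J) ε²) ∫ J(z) (f(x + ε z) - f(x)) dz`. Expanding `f` to second order at `x`, the first-order
term integrates to zero because `J` is even, and the second moments of `J` turn the quadratic term
into exactly `Δf(x)`. What is left is the Taylor remainder, which the Hölder bound on `D²f` makes
`O(|εz|^(2+α))`; integrated against `J` it contributes `O(ε^α)` after division by `ε²`.
-/

open MeasureTheory Matrix Set

/-- First partial derivative `∂ᵢ f (x)`. -/
noncomputable def pd1 {n : ℕ} (f : EuclideanSpace ℝ (Fin n) → ℝ)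
    (x : EuclideanSpace ℝ (Fin n)) (i : Fin n) : ℝ :=
  fderiv ℝ f x (EuclideanSpace.single i 1)

/-- Second partial derivative `∂ᵢ∂ⱼ f (x)`. -/
noncomputable def pd2 {n : ℕ} (f : EuclideanSpace ℝ (Fin n) → ℝ)
    (x : EuclideanSpace ℝ (Fin n)) (i j : Fin n) : ℝ :=
  fderiv ℝ (fderiv ℝ f) x (EuclideanSpace.single i 1) (EuclideanSpace.single j 1)

/-- The Laplacian `Δf(x) = ∑ᵢ ∂ᵢ∂ᵢ f(x)`. -/
noncomputable def lap {n : ℕ} (f : EuclideanSpace ℝ (Fin n) → ℝ)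
    (x : EuclideanSpace ℝ (Fin n)) : ℝ :=
  ∑ i, pd2 f x i i

section Taylor

variable {E : Type*} [NormedAddCommGroup E] [NormedSpace ℝ E]

noncomputable def taylorRemainder₂ (f : E → ℝ) (x h : E) : ℝ :=
  f (x + h) - f x - fderiv ℝ f x h - 2⁻¹ * fderiv ℝ (fderiv ℝ f) x h h

theorem abs_taylorRemainder₂_le {f : E → ℝ} (hf : ContDiff ℝ 2 f) {x h : E} {C : ℝ}
    (hC : ∀ k, ‖k‖ ≤ ‖h‖ →
      ‖fderiv ℝ (fderiv ℝ f) (x + k) - fderiv ℝ (fderiv ℝ f) x‖ ≤ C) :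
    |taylorRemainder₂ f x h| ≤ C * ‖h‖ * ‖h‖ := by
  set B := fderiv ℝ (fderiv ℝ f) x
  have hf' : ∀ y, HasFDerivAt f (fderiv ℝ f y) y := fun y =>
    (hf.differentiable two_ne_zero y).hasFDerivAt
  have hf'' : ∀ y, HasFDerivAt (fderiv ℝ f) (fderiv ℝ (fderiv ℝ f) y) y := fun y =>
    ((hf.fderiv_right (m := 1) (by norm_num)).differentiable one_ne_zero y).hasFDerivAt
  set s := Metric.closedBall x ‖h‖
  have hxs : x ∈ s := Metric.mem_closedBall_self (norm_nonneg h)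
  have hC' : ∀ y ∈ s, ‖fderiv ℝ (fderiv ℝ f) y - B‖ ≤ C := fun y hy => by
    simpa using hC (y - x) (by simpa [s, dist_eq_norm] using hy)
  have hC0 : 0 ≤ C := (norm_nonneg (fderiv ℝ (fderiv ℝ f) x - B)).trans (hC' x hxs)
  have hgrad : ∀ y ∈ s, ‖fderiv ℝ f y - B (y - x) - fderiv ℝ f x‖ ≤ C * ‖h‖ := fun y hy => by
    rw [sub_right_comm]
    exact ((convex_closedBall x ‖h‖).norm_image_sub_le_of_norm_hasFDerivWithin_le'
      (fun z _ => (hf'' z).hasFDerivWithinAt) hC' hxs hy).trans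
      (mul_le_mul_of_nonneg_left (by simpa [s, dist_eq_norm] using hy) hC0)
  set g : E → ℝ := fun y => f y - 2⁻¹ * B (y - x) (y - x)
  -- the symmetry of `B` turns the derivative of the quadratic term into `B (y - x)`
  have hg : ∀ y, HasFDerivAt g (fderiv ℝ f y - B (y - x)) y := by
    intro y
    have hsub : HasFDerivAt (fun y : E => y - x) (ContinuousLinearMap.id ℝ E) y :=
      (hasFDerivAt_id y).sub_const x
    refine ((hf' y).sub ((B.hasFDerivAt_of_bilinear hsub hsub).const_mul 2⁻¹)).congr_fderiv ?_
    ext v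
    have hsymm : B v (y - x) = B (y - x) v :=
      ((hf.contDiffAt).isSymmSndFDerivAt (by simp)) v (y - x)
    have hR : B.precompR E (y - x) (ContinuousLinearMap.id ℝ E) v = B (y - x) v := rfl
    simp only [_root_.sub_apply, _root_.smul_apply,
      _root_.add_apply, ContinuousLinearMap.precompL_apply, hR,
      ContinuousLinearMap.id_apply, hsymm, smul_eq_mul]
    ring
  have key := (convex_closedBall x ‖h‖).norm_image_sub_le_of_norm_hasFDerivWithin_le'
    (fun z _ => (hg z).hasFDerivWithinAt) hgrad hxs (y := x + h) (by simp [s])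
  simp only [g, add_sub_cancel_left, sub_self, map_zero,
    mul_zero, sub_zero, Real.norm_eq_abs] at key
  convert key using 2
  unfold taylorRemainder₂
  ring

theorem abs_taylorRemainder₂_le_of_holder {f : E → ℝ} (hf : ContDiff ℝ 2 f) {K α : ℝ}
    (hK : 0 ≤ K) (hα : 0 ≤ α)
    (hHol : ∀ y z, ‖fderiv ℝ (fderiv ℝ f) y - fderiv ℝ (fderiv ℝ f) z‖ ≤ K * ‖y - z‖ ^ α)
    (x h : E) :
    |taylorRemainder₂ f x h| ≤ K * ‖h‖ ^ (2 + α) := by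
  refine (abs_taylorRemainder₂_le hf (C := K * ‖h‖ ^ α) fun k hk => ?_).trans_eq ?_
  · refine (hHol _ _).trans ?_
    rw [add_sub_cancel_left]
    gcongr
  · rw [Real.rpow_add' (norm_nonneg h) (by positivity), Real.rpow_two]
    ring

end Taylor

section Euclidean

variable {n : ℕ}

theorem EuclideanSpace.apply_apply_eq_sum
    (B : EuclideanSpace ℝ (Fin n) →L[ℝ] EuclideanSpace ℝ (Fin n) →L[ℝ] ℝ)
    (v w : EuclideanSpace ℝ (Fin n)) :
    B v w = ∑ i, ∑ j, v i * w j * B (EuclideanSpace.single i 1) (EuclideanSpace.single j 1) := by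
  conv_lhs => rw [← (EuclideanSpace.basisFun (Fin n) ℝ).sum_repr v,
    ← (EuclideanSpace.basisFun (Fin n) ℝ).sum_repr w]
  simp only [map_sum, map_smul, _root_.sum_apply, _root_.smul_apply, smul_eq_mul,
    EuclideanSpace.basisFun_repr, EuclideanSpace.basisFun_apply, Finset.mul_sum]
  rw [Finset.sum_comm]
  exact Finset.sum_congr rfl fun _ _ => Finset.sum_congr rfl fun _ _ => by ring

theorem EuclideanSpace.opNorm_le_sum_abs_apply_single
    (B : EuclideanSpace ℝ (Fin n) →L[ℝ] EuclideanSpace ℝ (Fin n) →L[ℝ] ℝ) :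
    ‖B‖ ≤ ∑ i, ∑ j, |B (EuclideanSpace.single i 1) (EuclideanSpace.single j 1)| := by
  refine B.opNorm_le_bound₂ (by positivity) fun v w => ?_
  rw [Real.norm_eq_abs, EuclideanSpace.apply_apply_eq_sum, Finset.sum_mul, Finset.sum_mul]
  refine (Finset.abs_sum_le_sum_abs _ _).trans (Finset.sum_le_sum fun i _ => ?_)
  rw [Finset.sum_mul, Finset.sum_mul]
  refine (Finset.abs_sum_le_sum_abs _ _).trans (Finset.sum_le_sum fun j _ => ?_)
  rw [abs_mul, abs_mul, mul_comm, mul_assoc]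
  gcongr
  · exact PiLp.norm_apply_le v i
  · exact PiLp.norm_apply_le w j

theorem norm_fderiv_fderiv_sub_le_of_abs_pd2_sub_le {f : EuclideanSpace ℝ (Fin n) → ℝ} {H α : ℝ}
    (hHol : ∀ x y, ∀ i j : Fin n, |pd2 f x i j - pd2 f y i j| ≤ H * ‖x - y‖ ^ α)
    (x y : EuclideanSpace ℝ (Fin n)) :
    ‖fderiv ℝ (fderiv ℝ f) x - fderiv ℝ (fderiv ℝ f) y‖ ≤ n ^ 2 * H * ‖x - y‖ ^ α := by
  refine (EuclideanSpace.opNorm_le_sum_abs_apply_single _).trans ?_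
  calc _ ≤ ∑ _i : Fin n, ∑ _j : Fin n, H * ‖x - y‖ ^ α :=
        Finset.sum_le_sum fun i _ => Finset.sum_le_sum fun j _ => hHol x y i j
    _ = n ^ 2 * H * ‖x - y‖ ^ α := by
        simp only [Finset.sum_const, Finset.card_univ, Fintype.card_fin, nsmul_eq_mul]
        ring

end Euclidean

section Kernel

theorem MeasureTheory.Integrable.mul_continuous_of_hasCompactSupport {X : Type*}
    [TopologicalSpace X] [T2Space X] [MeasurableSpace X] [OpensMeasurableSpace X]
    {μ : Measure X} {J g : X → ℝ}
    (hJ : Integrable J μ) (hJcs : HasCompactSupport J) (hg : Continuous g) :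
    Integrable (fun z => J z * g z) μ :=
  (integrableOn_iff_integrable_of_support_subset
    ((Function.support_mul_subset_left J g).trans (subset_tsupport J))).1
    (hJ.integrableOn.mul_continuousOn hg.continuousOn hJcs)

theorem integral_mul_clm_eq_zero_of_even {E : Type*} [NormedAddCommGroup E] [NormedSpace ℝ E]
    [MeasurableSpace E] [MeasurableNeg E] {μ : Measure E} [μ.IsNegInvariant] {J : E → ℝ}
    (hJeven : ∀ x, J (-x) = J x) (L : E →L[ℝ] ℝ) :
    ∫ z, J z * L z ∂μ = 0 := by
  have h := integral_neg_eq_self (fun z => J z * L z) μ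
  simp only [hJeven, map_neg, mul_neg, integral_neg] at h
  linarith

variable {n : ℕ} {J : EuclideanSpace ℝ (Fin n) → ℝ}

theorem integral_mul_apply_apply_self_eq (hJ : Integrable J) (hJcs : HasCompactSupport J)
    {CJ : ℝ} (hJmom : ∀ i j : Fin n, ∫ x, J x * (x i * x j) = if i = j then CJ else 0)
    (B : EuclideanSpace ℝ (Fin n) →L[ℝ] EuclideanSpace ℝ (Fin n) →L[ℝ] ℝ) :
    ∫ z, J z * B z z = CJ * ∑ i, B (EuclideanSpace.single i 1) (EuclideanSpace.single i 1) := by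
  have hint : ∀ i j : Fin n, Integrable fun z : EuclideanSpace ℝ (Fin n) =>
      B (EuclideanSpace.single i 1) (EuclideanSpace.single j 1) * (J z * (z i * z j)) :=
    fun i j => (hJ.mul_continuous_of_hasCompactSupport hJcs (by fun_prop)).const_mul _
  calc ∫ z, J z * B z z
      = ∫ z, ∑ i, ∑ j, B (EuclideanSpace.single i 1) (EuclideanSpace.single j 1) *
          (J z * (z i * z j)) := by
        refine integral_congr_ae (Filter.Eventually.of_forall fun z => ?_)
        simp only [EuclideanSpace.apply_apply_eq_sum B z z, Finset.mul_sum]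
        exact Finset.sum_congr rfl fun _ _ => Finset.sum_congr rfl fun _ _ => by ring
    _ = ∑ i, ∑ j, B (EuclideanSpace.single i 1) (EuclideanSpace.single j 1) *
          ∫ z, J z * (z i * z j) := by
        rw [integral_finsetSum _ fun i _ => integrable_finsetSum _ fun j _ => hint i j]
        simp_rw [integral_finsetSum _ fun j _ => hint _ j, integral_const_mul]
    _ = CJ * ∑ i, B (EuclideanSpace.single i 1) (EuclideanSpace.single i 1) := by
        simp [hJmom, Finset.mul_sum, mul_comm]

theorem integral_rescale_of_even (hJeven : ∀ x, J (-x) = J x) {ε : ℝ} (hε : 0 < ε)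
    (g : EuclideanSpace ℝ (Fin n) → ℝ) (x : EuclideanSpace ℝ (Fin n)) :
    ∫ y, J (ε⁻¹ • (x - y)) * g y = ε ^ n * ∫ z, J z * g (x + ε • z) := by
  set G := fun z => J z * g (x + ε • z)
  have hG : ∀ y, J (ε⁻¹ • (x - y)) * g y = G (ε⁻¹ • (y - x)) := fun y => by
    simp only [G]
    rw [smul_inv_smul₀ hε.ne', add_sub_cancel, ← hJeven, ← smul_neg, neg_sub]
  simp_rw [hG]
  rw [integral_sub_right_eq_self (fun w => G (ε⁻¹ • w)),
    Measure.integral_comp_inv_smul_of_nonneg volume G hε.le, finrank_euclideanSpace_fin,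
    smul_eq_mul]

end Kernel

section Approximation

variable {n : ℕ} {J : EuclideanSpace ℝ (Fin n) → ℝ} {CJ : ℝ} {f : EuclideanSpace ℝ (Fin n) → ℝ}

theorem integral_mul_sub_eq_lap_add (hJ : Integrable J) (hJcs : HasCompactSupport J)
    (hJeven : ∀ x, J (-x) = J x)
    (hJmom : ∀ i j : Fin n, ∫ x, J x * (x i * x j) = if i = j then CJ else 0)
    (hf : ContDiff ℝ 2 f) (ε : ℝ) (x : EuclideanSpace ℝ (Fin n)) :
    ∫ z, J z * (f (x + ε • z) - f x) =
      ε ^ 2 / 2 * (CJ * lap f x) + ∫ z, J z * taylorRemainder₂ f x (ε • z) := by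
  set L := fderiv ℝ f x
  set B := fderiv ℝ (fderiv ℝ f) x
  have hR : Continuous fun z => taylorRemainder₂ f x (ε • z) := by
    have := hf.continuous
    unfold taylorRemainder₂
    fun_prop
  have hpt : ∀ z, J z * (f (x + ε • z) - f x) =
      ε * (J z * L z) + (ε ^ 2 / 2 * (J z * B z z) + J z * taylorRemainder₂ f x (ε • z)) :=
    fun z => by
      simp only [taylorRemainder₂, L, B, map_smul, _root_.smul_apply, smul_eq_mul]
      ring
  have hL : Integrable fun z => ε * (J z * L z) :=
    (hJ.mul_continuous_of_hasCompactSupport hJcs L.continuous).const_mul ε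
  have hB : Integrable fun z => ε ^ 2 / 2 * (J z * B z z) :=
    (hJ.mul_continuous_of_hasCompactSupport hJcs (g := fun z => B z z) (by fun_prop)).const_mul _
  have hRint := hJ.mul_continuous_of_hasCompactSupport hJcs hR
  have hBR : Integrable fun z =>
      ε ^ 2 / 2 * (J z * B z z) + J z * taylorRemainder₂ f x (ε • z) := hB.add hRint
  simp_rw [hpt]
  rw [integral_add hL hBR, integral_add hB hRint, integral_const_mul,
    integral_const_mul, integral_mul_clm_eq_zero_of_even hJeven,
    integral_mul_apply_apply_self_eq hJ hJcs hJmom]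
  simp [lap, pd2, B]

theorem abs_integral_mul_taylorRemainder₂_le (hJ : Integrable J) (hJcs : HasCompactSupport J)
    (hJ0 : ∀ x, 0 ≤ J x) (hf : ContDiff ℝ 2 f) {K α : ℝ} (hK : 0 ≤ K) (hα : 0 ≤ α)
    (hHol : ∀ y z, ‖fderiv ℝ (fderiv ℝ f) y - fderiv ℝ (fderiv ℝ f) z‖ ≤ K * ‖y - z‖ ^ α)
    {ε : ℝ} (hε : 0 ≤ ε) (x : EuclideanSpace ℝ (Fin n)) :
    |∫ z, J z * taylorRemainder₂ f x (ε • z)| ≤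
      K * ε ^ (2 + α) * ∫ z, J z * ‖z‖ ^ (2 + α) := by
  rw [← integral_const_mul]
  refine (abs_integral_le_integral_abs).trans (integral_mono_of_nonneg
    (Filter.Eventually.of_forall fun z => abs_nonneg _)
    ((hJ.mul_continuous_of_hasCompactSupport hJcs
      (continuous_norm.rpow_const fun _ => Or.inr (by positivity))).const_mul _)
    (Filter.Eventually.of_forall fun z => ?_))
  calc |J z * taylorRemainder₂ f x (ε • z)|
      = J z * |taylorRemainder₂ f x (ε • z)| := by rw [abs_mul, abs_of_nonneg (hJ0 z)]
    _ ≤ J z * (K * ‖ε • z‖ ^ (2 + α)) :=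
        mul_le_mul_of_nonneg_left (abs_taylorRemainder₂_le_of_holder hf hK hα hHol x _) (hJ0 z)
    _ = K * ε ^ (2 + α) * (J z * ‖z‖ ^ (2 + α)) := by
        rw [norm_smul, Real.norm_of_nonneg hε, Real.mul_rpow hε (norm_nonneg z)]
        ring

theorem abs_nonlocal_sub_lap_le (hJ : Integrable J) (hJcs : HasCompactSupport J)
    (hJ0 : ∀ x, 0 ≤ J x) (hJeven : ∀ x, J (-x) = J x) (hCJ : CJ ≠ 0)
    (hJmom : ∀ i j : Fin n, ∫ x, J x * (x i * x j) = if i = j then CJ else 0)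
    {α H : ℝ} (hα : 0 ≤ α) (hH : 0 ≤ H) (hf : ContDiff ℝ 2 f)
    (hHol : ∀ x y, ∀ i j : Fin n, |pd2 f x i j - pd2 f y i j| ≤ H * ‖x - y‖ ^ α)
    {ε : ℝ} (hε : 0 < ε) (x : EuclideanSpace ℝ (Fin n)) :
    |2 / (CJ * ε ^ (n + 2)) * (∫ y, J (ε⁻¹ • (x - y)) * (f y - f x)) - lap f x| ≤
      2 * n ^ 2 * H * (∫ z, J z * ‖z‖ ^ (2 + α)) / |CJ| * ε ^ α := by
  have hrem := abs_integral_mul_taylorRemainder₂_le hJ hJcs hJ0 hf (by positivity) hα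
    (norm_fderiv_fderiv_sub_le_of_abs_pd2_sub_le hHol) hε.le x
  rw [integral_rescale_of_even hJeven hε, integral_mul_sub_eq_lap_add hJ hJcs hJeven hJmom hf]
  have hkey : 2 / (CJ * ε ^ (n + 2)) * (ε ^ n * (ε ^ 2 / 2 * (CJ * lap f x) +
      ∫ z, J z * taylorRemainder₂ f x (ε • z))) - lap f x =
      2 / (CJ * ε ^ 2) * ∫ z, J z * taylorRemainder₂ f x (ε • z) := by
    field_simp
    ring
  rw [hkey, abs_mul, abs_div, abs_two, abs_mul, abs_of_pos (by positivity : (0:ℝ) < ε ^ 2)]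
  calc 2 / (|CJ| * ε ^ 2) * |∫ z, J z * taylorRemainder₂ f x (ε • z)|
      ≤ 2 / (|CJ| * ε ^ 2) * (n ^ 2 * H * ε ^ (2 + α) * ∫ z, J z * ‖z‖ ^ (2 + α)) := by
        gcongr
    _ = 2 * n ^ 2 * H * (∫ z, J z * ‖z‖ ^ (2 + α)) / |CJ| * ε ^ α := by
        rw [Real.rpow_add hε, Real.rpow_two]
        field_simp

end Approximation

theorem stmt7_general (n : ℕ)
    (J : EuclideanSpace ℝ (Fin n) → ℝ) (hJint : Integrable J)
    (hJcs : HasCompactSupport J) (hJ0 : ∀ x, 0 ≤ J x) (hJeven : ∀ x, J (-x) = J x)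
    (CJ : ℝ) (hCJ : 0 < CJ)
    (hJmom : ∀ i j : Fin n, ∫ x, J x * (x i * x j) = if i = j then CJ else 0)
    (α : ℝ) (hα : α ∈ Ioc (0:ℝ) 1) (H : ℝ) (hH : 0 ≤ H)
    (a u : EuclideanSpace ℝ (Fin n) → ℝ)
    (hf : ContDiff ℝ 2 (fun x => a x * u x))
    (hfHolder : ∀ x y, ∀ i j : Fin n,
      |pd2 (fun z => a z * u z) x i j - pd2 (fun z => a z * u z) y i j| ≤ H * ‖x - y‖ ^ α) :
    ∃ C : ℝ, ∀ ε : ℝ, 0 < ε → ∀ x,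
      |2 / (CJ * ε ^ (n + 2)) * (∫ y, J (ε⁻¹ • (x - y)) * (a y * u y - a x * u x)) -
          lap (fun z => a z * u z) x| ≤ C * ε ^ α :=
  ⟨_, fun _ hε x => abs_nonlocal_sub_lap_le hJint hJcs hJ0 hJeven hCJ.ne' hJmom hα.1.le hH hf
    hfHolder hε x⟩

/-- The rescaled non-local Fokker–Planck operator `ℒ_ε` approximates `Δ(a·u)` at rate `ε^α`. -/
theorem stmt7 (n : ℕ) (hn : 1 ≤ n)
    (J : EuclideanSpace ℝ (Fin n) → ℝ) (hJint : Integrable J)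
    (hJcs : HasCompactSupport J) (hJ0 : ∀ x, 0 ≤ J x) (hJeven : ∀ x, J (-x) = J x)
    (CJ : ℝ) (hCJ : 0 < CJ)
    (hJmom : ∀ i j : Fin n, ∫ x, J x * (x i * x j) = if i = j then CJ else 0)
    (α : ℝ) (hα : α ∈ Ioc (0:ℝ) 1) (H : ℝ) (hH : 0 ≤ H)
    (a u : EuclideanSpace ℝ (Fin n) → ℝ)
    (habdd : ∃ C, ∀ x, |a x| ≤ C) (hubdd : ∃ C, ∀ x, |u x| ≤ C)
    (hf : ContDiff ℝ 2 (fun x => a x * u x))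
    (hfHolder : ∀ x y, ∀ i j : Fin n,
      |pd2 (fun z => a z * u z) x i j - pd2 (fun z => a z * u z) y i j| ≤ H * ‖x - y‖ ^ α) :
    ∃ C : ℝ, ∀ ε : ℝ, 0 < ε → ∀ x,
      |2 / (CJ * ε ^ (n + 2)) * (∫ y, J (ε⁻¹ • (x - y)) * (a y * u y - a x * u x)) -
          lap (fun z => a z * u z) x| ≤ C * ε ^ α :=
  stmt7_general n J hJint hJcs hJ0 hJeven CJ hCJ hJmom α hα H hH a u hf hfHolder
end
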